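/- There exist a probability distribution F on [0,1] supported on a single point (a point mass) and a constant c > 0, independent of m, such that for every positive integer m, sup_{x ∈ [0,1]} |F^{(m)}(x) − F(x)| ≥ c. In particular, one may take F to be the Dirac mass at 1/2 + κ for a sufficiently small irrational κ > 0. -/

import Mathlib

open MeasureTheory ProbabilityTheory Real

noncomputable section

/-- pmf of Binomial(m, s) at k. -/
def binomPMFr (m k : ℕ) (s : ℝ) : ℝ := (m.choose k : ℝ) * s ^ k * (1 - s) ^ (m - k)

/-- Law of ŝ = X/m where X ~ Binomial(m, s). -/
def binomLaw (m : ℕ) (s : ℝ) : Measure ℝ :=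
  ∑ k ∈ Finset.range (m + 1), ENNReal.ofReal (binomPMFr m k s) • Measure.dirac ((k : ℝ) / m)

/-- Binomial-mixture law of ŝ where s ~ μ. -/
def mixLaw (μ : Measure ℝ) (m : ℕ) : Measure ℝ := μ.bind (binomLaw m)

/-- CDF of a measure. -/
def cdfOf (μ : Measure ℝ) (x : ℝ) : ℝ := (μ (Set.Iic x)).toReal

/-
Let `p = 1/2 + κ` be irrational and `j = ⌊m p⌋₊`. Then `j/m < p`, and no atom `k/m` of the
Binomial law lies in `(j/m, p]`, so its CDF takes the same value `A` at `j/m` and at `p`, while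
the CDF of `δ_p` jumps from `0` to `1` there. Hence the Kolmogorov distance is at least
`max |A| |A - 1| ≥ 1/2`, for every `m`.
-/

open Set

lemma binomPMFr_nonneg {m k : ℕ} {s : ℝ} (hs : s ∈ Icc (0 : ℝ) 1) : 0 ≤ binomPMFr m k s := by
  have : 0 ≤ 1 - s := sub_nonneg.mpr hs.2
  have := hs.1
  unfold binomPMFr
  positivity

lemma sum_binomPMFr (m : ℕ) (s : ℝ) : ∑ k ∈ Finset.range (m + 1), binomPMFr m k s = 1 := by
  have h := (add_pow s (1 - s) m).symm
  rw [add_sub_cancel, one_pow] at h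
  rw [← h]
  exact Finset.sum_congr rfl fun k _ => by unfold binomPMFr; ring

lemma measurable_binomLaw (m : ℕ) : Measurable (binomLaw m) := by
  refine Measure.measurable_of_measurable_coe _ fun s _ => ?_
  simp only [binomLaw, Measure.finsetSum_apply, Measure.smul_apply, smul_eq_mul]
  refine Finset.measurable_sum _ fun k _ => ?_
  exact (ENNReal.measurable_ofReal.comp (by unfold binomPMFr; fun_prop)).mul_const _

lemma isProbabilityMeasure_binomLaw (m : ℕ) {s : ℝ} (hs : s ∈ Icc (0 : ℝ) 1) :
    IsProbabilityMeasure (binomLaw m s) := by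
  constructor
  simp only [binomLaw, Measure.finsetSum_apply, Measure.smul_apply, measure_univ, smul_eq_mul,
    mul_one]
  rw [← ENNReal.ofReal_sum_of_nonneg fun k _ => binomPMFr_nonneg hs, sum_binomPMFr,
    ENNReal.ofReal_one]

lemma binomLaw_apply_eq_zero (m : ℕ) (s : ℝ) {t : Set ℝ}
    (ht : ∀ k ≤ m, (k : ℝ) / m ∉ t) : binomLaw m s t = 0 := by
  simp only [binomLaw, Measure.finsetSum_apply, Measure.smul_apply, smul_eq_mul]
  refine Finset.sum_eq_zero fun k hk => ?_
  rw [Measure.dirac_apply, indicator_of_notMem (ht k (Finset.mem_range_succ_iff.mp hk)), mul_zero]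

lemma mixLaw_dirac (s : ℝ) (m : ℕ) : mixLaw (Measure.dirac s) m = binomLaw m s :=
  Measure.dirac_bind (measurable_binomLaw m) s

lemma cdfOf_dirac (p x : ℝ) : cdfOf (Measure.dirac p) x = if p ≤ x then 1 else 0 := by
  by_cases h : p ≤ x <;> simp [cdfOf, h]

lemma cdfOf_eq_of_measure_Ioc_eq_zero {μ : Measure ℝ} [IsFiniteMeasure μ] {x y : ℝ} (hxy : x ≤ y)
    (h : μ (Ioc x y) = 0) : cdfOf μ x = cdfOf μ y := by
  unfold cdfOf
  rw [← Iic_union_Ioc_eq_Iic hxy, measure_union (Iic_disjoint_Ioc le_rfl) measurableSet_Ioc, h,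
    add_zero]

lemma abs_cdfOf_sub_cdfOf_le_one (μ ν : Measure ℝ) [IsProbabilityMeasure μ]
    [IsProbabilityMeasure ν] (x : ℝ) : |cdfOf μ x - cdfOf ν x| ≤ 1 := by
  have h := abs_sub_le_of_le_of_le measureReal_nonneg
    (measureReal_le_one (μ := μ) (s := Iic x)) measureReal_nonneg
    (measureReal_le_one (μ := ν) (s := Iic x))
  rwa [sub_zero] at h

theorem half_le_iSup_abs_cdfOf_sub_cdfOf_dirac {μ : Measure ℝ} [IsProbabilityMeasure μ]
    {S : Set ℝ} {x₀ p : ℝ} (hx₀ : x₀ ∈ S) (hp : p ∈ S) (hx₀p : x₀ < p) (hμ : μ (Ioc x₀ p) = 0) :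
    1 / 2 ≤ ⨆ x : S, |cdfOf μ x - cdfOf (Measure.dirac p) x| := by
  have hbdd : BddAbove (range fun x : S => |cdfOf μ x - cdfOf (Measure.dirac p) x|) :=
    ⟨1, by rintro _ ⟨x, rfl⟩; exact abs_cdfOf_sub_cdfOf_le_one _ _ _⟩
  have hx₀_le : |cdfOf μ p| ≤ ⨆ x : S, |cdfOf μ x - cdfOf (Measure.dirac p) x| :=
    calc |cdfOf μ p| = |cdfOf μ x₀ - cdfOf (Measure.dirac p) x₀| := by
          rw [cdfOf_dirac, if_neg hx₀p.not_ge, sub_zero,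
            cdfOf_eq_of_measure_Ioc_eq_zero hx₀p.le hμ]
      _ ≤ _ := le_ciSup hbdd ⟨x₀, hx₀⟩
  have hp_le : |cdfOf μ p - 1| ≤ ⨆ x : S, |cdfOf μ x - cdfOf (Measure.dirac p) x| :=
    calc |cdfOf μ p - 1| = |cdfOf μ p - cdfOf (Measure.dirac p) p| := by
          rw [cdfOf_dirac, if_pos le_rfl]
      _ ≤ _ := le_ciSup hbdd ⟨p, hp⟩
  cases abs_cases (cdfOf μ p) <;> cases abs_cases (cdfOf μ p - 1) <;> linarith

lemma floor_mul_div_lt_of_irrational {p : ℝ} (hp : Irrational p) (hp0 : 0 ≤ p) {m : ℕ}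
    (hm : 1 ≤ m) : (⌊m * p⌋₊ : ℝ) / m < p := by
  have hm0 : (0 : ℝ) < m := by exact_mod_cast hm
  rw [div_lt_iff₀' hm0]
  exact (Nat.floor_le (by positivity)).lt_of_ne
    fun h => (hp.natCast_mul (by omega)).ne_nat _ h.symm

lemma binomLaw_Ioc_floor_mul_div_eq_zero (m : ℕ) (s p : ℝ) :
    binomLaw m s (Ioc ((⌊m * p⌋₊ : ℝ) / m) p) = 0 := by
  refine binomLaw_apply_eq_zero m s fun k _ ⟨hjk, hkp⟩ => ?_
  rcases Nat.eq_zero_or_pos m with rfl | hm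
  · simp at hjk
  have hm0 : (0 : ℝ) < m := by exact_mod_cast hm
  rw [div_lt_div_iff_of_pos_right hm0, Nat.cast_lt, Nat.floor_lt' (by omega)] at hjk
  rw [div_le_iff₀' hm0] at hkp
  exact hjk.not_ge hkp

/-- There is a point-mass distribution `F` on `[0,1]` (the Dirac mass at
`1/2 + κ` for a sufficiently small irrational `κ > 0`) and a constant `c > 0`, independent
of `m`, such that for every positive integer `m`,
`sup_{x ∈ [0,1]} |F^{(m)}(x) − F(x)| ≥ c`. -/
theorem stmt2 :
    ∃ κ : ℝ, 0 < κ ∧ Irrational κ ∧ (1/2 + κ) ∈ Set.Icc (0:ℝ) 1 ∧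
      ∃ c : ℝ, 0 < c ∧ ∀ m : ℕ, 1 ≤ m →
        c ≤ ⨆ x : Set.Icc (0:ℝ) 1,
              |cdfOf (mixLaw (Measure.dirac (1/2 + κ)) m) x
                - cdfOf (Measure.dirac (1/2 + κ)) x| := by
  have hsqrt : 1 < √2 ∧ √2 < 3 / 2 := by
    constructor <;> nlinarith [sq_sqrt (zero_le_two : (0 : ℝ) ≤ 2), sqrt_nonneg 2]
  have hκ : Irrational (√2 - 1) := by simpa using irrational_sqrt_two.sub_intCast 1
  have hp : Irrational (1 / 2 + (√2 - 1)) := by simpa using hκ.ratCast_add (1 / 2)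
  have hp01 : 1 / 2 + (√2 - 1) ∈ Icc (0 : ℝ) 1 := ⟨by linarith, by linarith⟩
  refine ⟨√2 - 1, by linarith, hκ, hp01, 1 / 2, one_half_pos, fun m hm => ?_⟩
  have := isProbabilityMeasure_binomLaw m hp01
  have hj := floor_mul_div_lt_of_irrational hp hp01.1 hm
  rw [mixLaw_dirac]
  exact half_le_iSup_abs_cdfOf_sub_cdfOf_dirac ⟨by positivity, hj.le.trans hp01.2⟩ hp01 hj
    (binomLaw_Ioc_floor_mul_div_eq_zero m _ _)
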